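/- arXiv:2301.06446 — 2 statements merged into one kernel-verified Lean document; each statement's English description precedes it below -/
import Mathlib

section
/- Let m ≡ 1 (mod 6) with m ≥ 7, n = 2^m − 1, and v = 2^{(m−1)/2} − 1. Then gcd(v, n) = 1, and for every integer a with 1 ≤ a ≤ 2^{(m−1)/2} + 2, the binary weight of (a·v mod n) is congruent to 0 modulo 3. -/
/-!
Write `m = 2k + 1`, so that `3 ∣ k`, `v = 2^k - 1` and `n = 2^(2k+1) - 1`; coprimality follows
from `gcd(2^k - 1, 2^(2k+1) - 1) = 2^gcd(k, 2k+1) - 1 = 1`.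
For `a ≤ 2^k + 2` the product `a·v` is already below `n`, and its binary expansion is explicit:
for `a ≤ 2^k` it is `a - 1` in the high `k` bits above the bitwise complement `2^k - a` of `a - 1`
in the low `k` bits, so its weight is `k`; `(2^k + 1)v = 2^(2k) - 1` has weight `2k`; and
`(2^k + 2)v = 2^(2k) + (2^k - 2)` has weight `1 + (k - 1)`. All of these are multiples of `k`.
-/

def w2 (x : ℕ) : ℕ := (Nat.digits 2 x).sum

lemma w2_add_two_mul {b : ℕ} (hb : b < 2) (c : ℕ) : w2 (b + 2 * c) = b + w2 c := by
  rcases Nat.eq_zero_or_pos (b + c) with h | h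
  · obtain ⟨rfl, rfl⟩ : b = 0 ∧ c = 0 := by omega
    simp [w2]
  · rw [w2, Nat.digits_add 2 one_lt_two b c hb (by omega), List.sum_cons, w2]

lemma w2_add_two_pow_mul {k b : ℕ} (hb : b < 2 ^ k) (c : ℕ) :
    w2 (b + 2 ^ k * c) = w2 b + w2 c := by
  induction k generalizing b with
  | zero =>
    obtain rfl : b = 0 := by simpa using hb
    simp [w2]
  | succ k ih =>
    have hbit : b % 2 < 2 := Nat.mod_lt b two_pos
    have hhigh : b / 2 < 2 ^ k := by rw [pow_succ] at hb; omega
    have hsplit : b + 2 ^ (k + 1) * c = b % 2 + 2 * (b / 2 + 2 ^ k * c) := by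
      rw [pow_succ]; nth_rewrite 1 [← Nat.mod_add_div b 2]; ring
    have hlow : w2 b = b % 2 + w2 (b / 2) := by
      conv_lhs => rw [← Nat.mod_add_div b 2]
      exact w2_add_two_mul hbit _
    rw [hsplit, w2_add_two_mul hbit, ih hhigh, hlow, add_assoc]

lemma w2_add_w2_two_pow_sub_one_sub {k x : ℕ} (hx : x < 2 ^ k) :
    w2 x + w2 (2 ^ k - 1 - x) = k := by
  induction k generalizing x with
  | zero =>
    obtain rfl : x = 0 := by simpa using hx
    simp [w2]
  | succ k ih =>
    obtain ⟨q, r, hr, rfl⟩ : ∃ q r, r < 2 ∧ x = r + 2 * q :=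
      ⟨x / 2, x % 2, Nat.mod_lt x two_pos, (Nat.mod_add_div x 2).symm⟩
    have hpow : 2 ^ (k + 1) = 2 * 2 ^ k := pow_succ' 2 k
    have hq : q < 2 ^ k := by omega
    have hcompl : 2 ^ (k + 1) - 1 - (r + 2 * q) = (1 - r) + 2 * (2 ^ k - 1 - q) := by omega
    have := ih hq
    rw [hcompl, w2_add_two_mul hr, w2_add_two_mul (by omega)]
    omega

lemma w2_two_pow_sub_one (k : ℕ) : w2 (2 ^ k - 1) = k := by
  simpa [w2] using w2_add_w2_two_pow_sub_one_sub (Nat.two_pow_pos k)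

lemma w2_two_pow (k : ℕ) : w2 (2 ^ k) = 1 := by
  simpa [w2] using w2_add_two_pow_mul (Nat.two_pow_pos k) 1

lemma w2_two_pow_sub_two {k : ℕ} (hk : 1 ≤ k) : w2 (2 ^ k - 2) = k - 1 := by
  have h := w2_add_w2_two_pow_sub_one_sub (k := k) (x := 1) (Nat.one_lt_two_pow (by omega))
  rw [show w2 1 = 1 by simp [w2], show 2 ^ k - 1 - 1 = 2 ^ k - 2 by omega] at h
  omega

lemma w2_mul_two_pow_sub_one_of_le {k a : ℕ} (ha : 1 ≤ a) (hak : a ≤ 2 ^ k) :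
    w2 (a * (2 ^ k - 1)) = k := by
  have hsplit : a * (2 ^ k - 1) = (2 ^ k - 1 - (a - 1)) + 2 ^ k * (a - 1) := by
    have hpos : 1 ≤ 2 ^ k := Nat.one_le_two_pow
    zify [ha, hpos, (by omega : a - 1 ≤ 2 ^ k - 1)]
    ring
  rw [hsplit, w2_add_two_pow_mul (by omega), add_comm]
  exact w2_add_w2_two_pow_sub_one_sub (by omega)

lemma two_pow_add_one_mul_two_pow_sub_one (k : ℕ) :
    (2 ^ k + 1) * (2 ^ k - 1) = 2 ^ (2 * k) - 1 := by
  rw [two_mul, pow_add, ← Nat.sq_sub_sq, sq, one_pow]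

lemma two_pow_add_two_mul_two_pow_sub_one {k : ℕ} (hk : 1 ≤ k) :
    (2 ^ k + 2) * (2 ^ k - 1) = (2 ^ k - 2) + 2 ^ k * 2 ^ k := by
  have h2 : 2 ≤ 2 ^ k := Nat.le_self_pow (by omega) 2
  zify [h2, (by omega : 1 ≤ 2 ^ k)]
  ring

lemma dvd_w2_mul_two_pow_sub_one {k a : ℕ} (hk : 1 ≤ k) (ha : 1 ≤ a) (hak : a ≤ 2 ^ k + 2) :
    k ∣ w2 (a * (2 ^ k - 1)) := by
  rcases Nat.lt_or_ge a (2 ^ k + 1) with hlt | hge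
  · rw [w2_mul_two_pow_sub_one_of_le ha (by omega)]
  rcases Nat.eq_or_lt_of_le hge with rfl | hgt
  · rw [two_pow_add_one_mul_two_pow_sub_one, w2_two_pow_sub_one]
    exact Dvd.intro_left 2 rfl
  · obtain rfl : a = 2 ^ k + 2 := by omega
    rw [two_pow_add_two_mul_two_pow_sub_one hk,
      w2_add_two_pow_mul (Nat.sub_lt (Nat.two_pow_pos k) two_pos), w2_two_pow,
      w2_two_pow_sub_two hk, Nat.sub_add_cancel hk]

lemma mul_two_pow_sub_one_lt {k a : ℕ} (hak : a ≤ 2 ^ k + 2) :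
    a * (2 ^ k - 1) < 2 ^ (2 * k + 1) - 1 := by
  obtain ⟨P, hP⟩ : ∃ P, 2 ^ k = P + 1 := ⟨2 ^ k - 1, by have := Nat.two_pow_pos k; omega⟩
  have hpow : 2 ^ (2 * k + 1) = 2 * (P + 1) * (P + 1) := by rw [pow_succ, two_mul, pow_add, hP]; ring
  rw [hpow, hP, Nat.add_sub_cancel]
  have hle : a * P ≤ (P + 3) * P := Nat.mul_le_mul_right P (by omega)
  have : 2 * (P + 1) * (P + 1) = (P + 3) * P + (P * P + P + 2) := by ring
  omega

theorem stmt3 (m : ℕ) (hm : m % 6 = 1) (hm7 : 7 ≤ m)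
    (n v : ℕ) (hn : n = 2 ^ m - 1) (hv : v = 2 ^ ((m - 1) / 2) - 1) :
    Nat.gcd v n = 1 ∧
    ∀ a : ℕ, 1 ≤ a → a ≤ 2 ^ ((m - 1) / 2) + 2 → w2 (a * v % n) % 3 = 0 := by
  obtain ⟨k, rfl⟩ : ∃ k, m = 2 * k + 1 := ⟨m / 2, by omega⟩
  have hk3 : 3 ∣ k := by omega
  rw [show (2 * k + 1 - 1) / 2 = k by omega] at hv ⊢
  subst hn hv
  refine ⟨?_, fun a ha hak => ?_⟩
  · rw [Nat.pow_sub_one_gcd_pow_sub_one, Nat.gcd_mul_right_add_right, Nat.gcd_one_right]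
    rfl
  · rw [Nat.mod_eq_of_lt (mul_two_pow_sub_one_lt hak), ← Nat.dvd_iff_mod_eq_zero]
    exact hk3.trans (dvd_w2_mul_two_pow_sub_one (by omega) ha hak)
end

section
/- Let m ≡ 3 (mod 6) with m ≥ 9, n = 2^m − 1, and v = 2^{(m−1)/2} − 1. Then gcd(v, n) = 1 and for every integer a with 1 ≤ a ≤ 2^{(m−1)/2}, the binary weight of a·v is congruent to 1 modulo 3. -/
namespace Nat

variable {b : ℕ}

theorem digits_sum_add_base_pow_mul (hb : 1 < b) {k x : ℕ} (hx : x < b ^ k) (y : ℕ) :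
    (b.digits (x + b ^ k * y)).sum = (b.digits x).sum + (b.digits y).sum := by
  rcases Nat.eq_zero_or_pos y with rfl | hy
  · simp
  have hlen : (b.digits x).length ≤ k := (digits_length_le_iff hb x).mpr hx
  have h := digits_append_zeroes_append_digits (k := k - (b.digits x).length) (n := x) hb hy
  rw [Nat.add_sub_cancel' hlen] at h
  simp [← h]

theorem digits_sum_add_base_mul (hb : 1 < b) {d : ℕ} (hd : d < b) (y : ℕ) :
    (b.digits (d + b * y)).sum = d + (b.digits y).sum := by
  by_cases h0 : d = 0 ∧ y = 0
  · simp [h0.1, h0.2]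
  · rw [digits_add b hb d y hd (by tauto), List.sum_cons]

theorem digits_sum_add_digits_sum_base_pow_sub_one_sub (hb : 1 < b) (k : ℕ) :
    ∀ x < b ^ k, (b.digits x).sum + (b.digits (b ^ k - 1 - x)).sum = k * (b - 1) := by
  induction k with
  | zero => intro x hx; simp_all
  | succ k ih =>
    intro x hx
    have hq : x / b < b ^ k := Nat.div_lt_of_lt_mul (by rwa [← pow_succ'])
    have hd : x % b < b := Nat.mod_lt x (by omega)
    have hx_split : x % b + b * (x / b) = x := Nat.mod_add_div x b
    have hcompl : b ^ (k + 1) - 1 - x = (b - 1 - x % b) + b * (b ^ k - 1 - x / b) := by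
      have hmul : b * (b ^ k - 1 - x / b) + b * (x / b) + b = b * b ^ k := by
        rw [← mul_add, ← mul_add_one]; congr 1; omega
      rw [pow_succ']
      omega
    have hsum := digits_sum_add_base_mul hb hd (x / b)
    rw [hx_split] at hsum
    rw [hcompl, digits_sum_add_base_mul hb (by omega), hsum, add_one_mul, ← ih _ hq]
    omega

theorem digits_sum_mul_base_pow_sub_one (hb : 1 < b) {k a : ℕ} (ha : 1 ≤ a)
    (ha' : a ≤ b ^ k) : (b.digits (a * (b ^ k - 1))).sum = k * (b - 1) := by
  obtain ⟨c, rfl⟩ := Nat.exists_eq_add_of_le' ha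
  have hc : c < b ^ k := by omega
  have hsplit : (c + 1) * (b ^ k - 1) = (b ^ k - 1 - c) + b ^ k * c := by
    have h : (c + 1) * (b ^ k - 1) + (c + 1) = b ^ k * c + b ^ k := by
      rw [← mul_add_one, Nat.sub_add_cancel (by omega), mul_comm, mul_add_one]
    omega
  rw [hsplit, digits_sum_add_base_pow_mul hb (by omega), add_comm,
    digits_sum_add_digits_sum_base_pow_sub_one_sub hb k c hc]

end Nat

theorem stmt6_general (m : ℕ) (hm : m % 6 = 3)
    (n v : ℕ) (hn : n = 2 ^ m - 1) (hv : v = 2 ^ ((m - 1) / 2) - 1) :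
    Nat.gcd v n = 1 ∧
    ∀ a : ℕ, 1 ≤ a → a ≤ 2 ^ ((m - 1) / 2) → w2 (a * v) % 3 = 1 := by
  obtain ⟨k, rfl⟩ : ∃ k, m = k * 2 + 1 := ⟨m / 2, by omega⟩
  rw [show (k * 2 + 1 - 1) / 2 = k by omega] at hv ⊢
  subst hn hv
  refine ⟨?_, fun a ha ha' => ?_⟩
  · rw [Nat.pow_sub_one_gcd_pow_sub_one, Nat.gcd_mul_left_add_right, Nat.gcd_one_right,
      pow_one]
  · rw [w2, Nat.digits_sum_mul_base_pow_sub_one one_lt_two ha ha']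
    omega

theorem stmt6 (m : ℕ) (hm : m % 6 = 3) (hm9 : 9 ≤ m)
    (n v : ℕ) (hn : n = 2 ^ m - 1) (hv : v = 2 ^ ((m - 1) / 2) - 1) :
    Nat.gcd v n = 1 ∧
    ∀ a : ℕ, 1 ≤ a → a ≤ 2 ^ ((m - 1) / 2) → w2 (a * v) % 3 = 1 :=
  stmt6_general m hm n v hn hv
end
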